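/- arXiv:1411.1347 — 7 statements merged into one kernel-verified Lean document; each statement's English description precedes it below -/
import Mathlib

section
/- With the notation of the preceding setting (G a Lie group, G₀ ⊴ G closed normal, ξ ∈ g*, ξ₀ = ξ|_{g₀}), if the restriction map ρ: g* → g₀* gives a well-defined bijection O_ξ^G → O_{ξ₀}^{G₀}, then G = G₀ · G_ξ. -/
/-- If the restriction map `ρ : g* → g₀*` gives a well-defined bijection
from the coadjoint orbit of `ξ` under `G` onto the coadjoint orbit of `ξ₀ = ξ|_{g₀}`
under `G₀`, then `G = G₀ ⬝ G_ξ`. -/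
theorem coadjoint_restriction_decomposition
    {G V : Type*} [Group G] [AddCommGroup V] [Module ℝ V] [Module.Finite ℝ V]
    (Ad : G →* (V ≃ₗ[ℝ] V)) (G₀ : Subgroup G) (hG₀ : G₀.Normal)
    (g₀ : Submodule ℝ V) (hinv : ∀ g : G, ∀ x ∈ g₀, Ad g x ∈ g₀)
    (ξ : V →ₗ[ℝ] ℝ)
    (hbij : Set.BijOn (fun η : V →ₗ[ℝ] ℝ => η ∘ₗ g₀.subtype)
      {η | ∃ g : G, η = ξ ∘ₗ (Ad g⁻¹).toLinearMap}
      {ζ | ∃ g ∈ G₀, ζ = (ξ ∘ₗ (Ad g⁻¹).toLinearMap) ∘ₗ g₀.subtype}) :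
    ∀ g : G, ∃ h ∈ G₀, ∃ k : G, ξ ∘ₗ (Ad k⁻¹).toLinearMap = ξ ∧ g = h * k := by
  intro g
  have hmem : (ξ ∘ₗ (Ad g⁻¹).toLinearMap) ∈
      {η : V →ₗ[ℝ] ℝ | ∃ g : G, η = ξ ∘ₗ (Ad g⁻¹).toLinearMap} := ⟨g, rfl⟩
  obtain ⟨h, hh, hres⟩ := hbij.mapsTo hmem
  have hmem' : (ξ ∘ₗ (Ad h⁻¹).toLinearMap) ∈
      {η : V →ₗ[ℝ] ℝ | ∃ g : G, η = ξ ∘ₗ (Ad g⁻¹).toLinearMap} := ⟨h, rfl⟩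
  have heq : ξ ∘ₗ (Ad g⁻¹).toLinearMap = ξ ∘ₗ (Ad h⁻¹).toLinearMap :=
    hbij.injOn hmem hmem' hres
  refine ⟨h, hh, h⁻¹ * g, ?_, by group⟩
  ext v
  have := congrArg (fun f : V →ₗ[ℝ] ℝ => f (Ad h v)) heq
  simp only [mul_inv_rev, inv_inv, LinearMap.coe_comp, Function.comp_apply,
    LinearEquiv.coe_coe, map_mul] at this ⊢
  show ξ ((Ad g⁻¹) ((Ad h) v)) = ξ v
  have h2 : (Ad h⁻¹) ((Ad h) v) = v := by
    have : (Ad h⁻¹) ((Ad h) v) = (Ad (h⁻¹ * h)) v := by rw [map_mul]; rfl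
    simpa using this
  rw [h2] at this
  exact this
end

section
/- Let G be a Lie group with closed normal subgroup G₀ and ξ ∈ g*. If (G₀)_{ξ₀} = G₀ ∩ G_ξ and G = G₀ · G_ξ, then the restriction map η ↦ η|_{g₀} gives a well-defined bijection from the coadjoint orbit O_ξ^G onto the coadjoint orbit O_{ξ₀}^{G₀} of ξ₀ = ξ|_{g₀}. -/
/-- If `(G₀)_{ξ₀} = G₀ ∩ G_ξ` and `G = G₀ ⬝ G_ξ`, then the restriction
map `η ↦ η|_{g₀}` gives a well-defined bijection from the coadjoint orbit of `ξ`
under `G` onto the coadjoint orbit of `ξ₀ = ξ|_{g₀}` under `G₀`. -/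
theorem coadjoint_restriction_bijection
    {G V : Type*} [Group G] [AddCommGroup V] [Module ℝ V] [Module.Finite ℝ V]
    (Ad : G →* (V ≃ₗ[ℝ] V)) (G₀ : Subgroup G) (hG₀ : G₀.Normal)
    (g₀ : Submodule ℝ V) (hinv : ∀ g : G, ∀ x ∈ g₀, Ad g x ∈ g₀)
    (ξ : V →ₗ[ℝ] ℝ)
    (hiso : {g | g ∈ G₀ ∧ (ξ ∘ₗ (Ad g⁻¹).toLinearMap) ∘ₗ g₀.subtype = ξ ∘ₗ g₀.subtype}
      = {g | g ∈ G₀ ∧ ξ ∘ₗ (Ad g⁻¹).toLinearMap = ξ})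
    (hdec : ∀ g : G, ∃ h ∈ G₀, ∃ k : G, ξ ∘ₗ (Ad k⁻¹).toLinearMap = ξ ∧ g = h * k) :
    Set.BijOn (fun η : V →ₗ[ℝ] ℝ => η ∘ₗ g₀.subtype)
      {η | ∃ g : G, η = ξ ∘ₗ (Ad g⁻¹).toLinearMap}
      {ζ | ∃ g ∈ G₀, ζ = (ξ ∘ₗ (Ad g⁻¹).toLinearMap) ∘ₗ g₀.subtype} := by
  have mulap : ∀ a b : G, ∀ v : V, Ad (a * b) v = Ad a (Ad b v) := by
    intro a b v; rw [map_mul]; rfl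
  have cancel : ∀ a : G, ∀ v : V, Ad a⁻¹ (Ad a v) = v := by
    intro a v
    rw [show Ad a⁻¹ (Ad a v) = Ad (a⁻¹ * a) v from (mulap _ _ _).symm,
      inv_mul_cancel, map_one]
    rfl
  have cancel' : ∀ a : G, ∀ v : V, Ad a (Ad a⁻¹ v) = v := by
    intro a v
    have := cancel a⁻¹ v
    rwa [inv_inv] at this
  -- key reduction: if g = h * k with ξ fixed by k, then ξ ∘ Ad g⁻¹ = ξ ∘ Ad h⁻¹
  have key : ∀ h k : G, ξ ∘ₗ (Ad k⁻¹).toLinearMap = ξ →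
      ξ ∘ₗ (Ad (h * k)⁻¹).toLinearMap = ξ ∘ₗ (Ad h⁻¹).toLinearMap := by
    intro h k hk
    ext v
    have h1 := LinearMap.congr_fun hk (Ad h⁻¹ v)
    simp only [LinearMap.coe_comp, Function.comp_apply, LinearEquiv.coe_coe] at h1 ⊢
    rw [mul_inv_rev, mulap, h1]
  refine ⟨?_, ?_, ?_⟩
  · rintro η ⟨g, rfl⟩
    obtain ⟨h, hhG, k, hk, rfl⟩ := hdec g
    exact ⟨h, hhG, by rw [key h k hk]⟩
  · rintro η₁ ⟨g₁, rfl⟩ η₂ ⟨g₂, rfl⟩ heq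
    obtain ⟨h₁, hh₁, k₁, hk₁, rfl⟩ := hdec g₁
    obtain ⟨h₂, hh₂, k₂, hk₂, rfl⟩ := hdec g₂
    rw [key h₁ k₁ hk₁] at heq ⊢
    rw [key h₂ k₂ hk₂] at heq ⊢
    -- heq : restrictions of ξ∘Ad h₁⁻¹ and ξ∘Ad h₂⁻¹ agree
    have hmem : (h₂⁻¹ * h₁) ∈ {g | g ∈ G₀ ∧
        (ξ ∘ₗ (Ad g⁻¹).toLinearMap) ∘ₗ g₀.subtype = ξ ∘ₗ g₀.subtype} := by
      refine ⟨mul_mem (inv_mem hh₂) hh₁, ?_⟩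
      ext x
      have hx : Ad h₂ (x : V) ∈ g₀ := hinv h₂ _ x.2
      have h1 := LinearMap.congr_fun heq (⟨Ad h₂ (x : V), hx⟩ : g₀)
      simp only [LinearMap.coe_comp, Function.comp_apply, Submodule.coe_subtype,
        LinearEquiv.coe_coe] at h1 ⊢
      rw [cancel] at h1
      rw [mul_inv_rev, inv_inv, mulap, h1]
    rw [hiso] at hmem
    obtain ⟨-, hfix⟩ := hmem
    ext v
    have h5 := LinearMap.congr_fun hfix (Ad h₂⁻¹ v)
    simp only [LinearMap.coe_comp, Function.comp_apply, LinearEquiv.coe_coe] at h5 ⊢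
    rw [mul_inv_rev, inv_inv, mulap, cancel'] at h5
    rw [h5]
  · rintro ζ ⟨g, hg, rfl⟩
    exact ⟨ξ ∘ₗ (Ad g⁻¹).toLinearMap, ⟨g, rfl⟩, rfl⟩
end

section
/- Let s be a Lie algebra, g = ℝ ∔_ω g₀ the central extension of a symplectic nilpotent Lie algebra (g₀, ω), and suppose s acts on g by derivations D with D(t,0) = 0 and Ran D ⊆ {0} × g₀ (coming from Der(g₀,ω)). Form the semidirect product g̃ = s ⋉ g with bracket [(D₁,x₁),(D₂,x₂)] = ([D₁,D₂], D₁(x₂) − D₂(x₁) + [x₁,x₂]). If the action map s → Der(g₀,ω) is injective, then the center of g̃ equals {0} × z, where z = ℝ × {0} is the center of g. -/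
/-- The bracket of the semidirect product `g̃ = s ⋉ (ℝ ∔_ω g₀)`:
`[(D₁,x₁),(D₂,x₂)] = ([D₁,D₂], D₁(x₂) − D₂(x₁) + [x₁,x₂])`, where each `D ∈ s`
acts on `g = ℝ × g₀` through `act D` on the `g₀`-component (killing the center). -/
def sdpBracket {s g₀ : Type*} [LieRing s] [LieAlgebra ℝ s]
    [LieRing g₀] [LieAlgebra ℝ g₀]
    (ω : g₀ →ₗ[ℝ] g₀ →ₗ[ℝ] ℝ) (act : s →ₗ[ℝ] (g₀ →ₗ[ℝ] g₀))
    (p q : s × ℝ × g₀) : s × ℝ × g₀ :=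
  (⁅p.1, q.1⁆,
    (ω p.2.2 q.2.2, act p.1 q.2.2 - act q.1 p.2.2 + ⁅p.2.2, q.2.2⁆))

/-! Bracketing a central element `(D, t, x)` with `(0, 0, y)` gives `(0, ω x y, D y + [x, y])`.
The `ℝ`-component vanishing for all `y` forces `x = 0` by nondegeneracy of `ω`; the last
component then says `act D = 0`, so `D = 0` by injectivity of the action. -/

section

variable {s g₀ : Type*} [LieRing s] [LieAlgebra ℝ s] [LieRing g₀] [LieAlgebra ℝ g₀]
  (ω : g₀ →ₗ[ℝ] g₀ →ₗ[ℝ] ℝ) (act : s →ₗ[ℝ] (g₀ →ₗ[ℝ] g₀))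

theorem sdpBracket_zero_zero_right (p : s × ℝ × g₀) (y : g₀) :
    sdpBracket ω act p (0, 0, y) = (0, ω p.2.2 y, act p.1 y + ⁅p.2.2, y⁆) := by
  simp [sdpBracket]

theorem sdpBracket_eq_zero_of_fst_eq_zero_of_snd_snd_eq_zero {p : s × ℝ × g₀}
    (hD : p.1 = 0) (hx : p.2.2 = 0) (q : s × ℝ × g₀) : sdpBracket ω act p q = 0 := by
  simp [sdpBracket, hD, hx]

variable {ω act}

theorem fst_eq_zero_and_snd_snd_eq_zero_of_sdpBracket_eq_zero
    (hnd : ∀ x : g₀, (∀ y : g₀, ω x y = 0) → x = 0) (hinj : Function.Injective act)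
    {p : s × ℝ × g₀} (h : ∀ y : g₀, sdpBracket ω act p (0, 0, y) = 0) :
    p.1 = 0 ∧ p.2.2 = 0 := by
  have hcomp (y : g₀) : ω p.2.2 y = 0 ∧ act p.1 y + ⁅p.2.2, y⁆ = 0 := by
    simpa [sdpBracket_zero_zero_right] using h y
  have hx : p.2.2 = 0 := hnd _ fun y => (hcomp y).1
  have hact : act p.1 = act 0 := by
    ext y
    simpa [hx] using (hcomp y).2
  exact ⟨hinj hact, hx⟩

end

theorem semidirect_product_center_general
    {s g₀ : Type*} [LieRing s] [LieAlgebra ℝ s]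
    [LieRing g₀] [LieAlgebra ℝ g₀]
    (ω : g₀ →ₗ[ℝ] g₀ →ₗ[ℝ] ℝ)
    (hnd : ∀ x : g₀, (∀ y : g₀, ω x y = 0) → x = 0)
    (act : s →ₗ[ℝ] (g₀ →ₗ[ℝ] g₀))
    (hinj : Function.Injective act) :
    ∀ p : s × ℝ × g₀,
      (∀ q : s × ℝ × g₀, sdpBracket ω act p q = 0) ↔ (p.1 = 0 ∧ p.2.2 = 0) := fun _ =>
  ⟨fun h => fst_eq_zero_and_snd_snd_eq_zero_of_sdpBracket_eq_zero hnd hinj fun y => h (0, 0, y),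
    fun ⟨hD, hx⟩ => sdpBracket_eq_zero_of_fst_eq_zero_of_snd_snd_eq_zero ω act hD hx⟩

/-- For the semidirect product `g̃ = s ⋉ g` of the central extension
`g = ℝ ∔_ω g₀` by a Lie algebra `s` acting through `Der(g₀, ω)`, if the action is
injective then the center of `g̃` is exactly `{0} × z` with `z = ℝ × {0}`. -/
theorem semidirect_product_center
    {s g₀ : Type*} [LieRing s] [LieAlgebra ℝ s]
    [LieRing g₀] [LieAlgebra ℝ g₀] [Module.Finite ℝ g₀]
    [LieRing.IsNilpotent g₀]
    (ω : g₀ →ₗ[ℝ] g₀ →ₗ[ℝ] ℝ)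
    (hskew : ∀ x y : g₀, ω x y = - ω y x)
    (hnd : ∀ x : g₀, (∀ y : g₀, ω x y = 0) → x = 0)
    (hcoc : ∀ x y z : g₀, ω x ⁅y, z⁆ + ω y ⁅z, x⁆ + ω z ⁅x, y⁆ = 0)
    (act : s →ₗ[ℝ] (g₀ →ₗ[ℝ] g₀))
    (hder : ∀ (D : s) (x y : g₀), act D ⁅x, y⁆ = ⁅act D x, y⁆ + ⁅x, act D y⁆)
    (hωact : ∀ (D : s) (x y : g₀), ω (act D x) y + ω x (act D y) = 0)
    (hlie : ∀ D₁ D₂ : s,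
      act ⁅D₁, D₂⁆ = act D₁ ∘ₗ act D₂ - act D₂ ∘ₗ act D₁)
    (hinj : Function.Injective act) :
    ∀ p : s × ℝ × g₀,
      (∀ q : s × ℝ × g₀, sdpBracket ω act p q = 0) ↔ (p.1 = 0 ∧ p.2.2 = 0) :=
  semidirect_product_center_general ω hnd act hinj
end

section
/- Let k be a nilpotent Lie algebra with 1-dimensional center z, and k₁, k₂ subalgebras with k = k₁ + k₂, k₁ ∩ k₂ = z, and [k₁,k₂] = {0}. Suppose each kᵢ has 1-dimensional center z and has generic flat coadjoint orbits, in the sense that for every ξᵢ ∈ kᵢ* not vanishing on z there exists η in the coadjoint orbit data such that for every X ∈ kᵢ \ z there is Y ∈ kᵢ with ξᵢ([X,Y]) ≠ 0 (i.e. the isotropy algebra of generic functionals equals z). Then for every ξ ∈ k* vanishing on chosen complements k₁⁰, k₂⁰ (with kᵢ = z ∔ kᵢ⁰) but not on z, the isotropy algebra k_ξ equals z; that is, k also has generic flat coadjoint orbits. -/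
/-! In `k = k₁ + k₂` with `[k₁, k₂] = 0`, write `X ∈ k_ξ` as `X₁ + X₂`. Against `Y ∈ kᵢ` only
the component `Xᵢ` pairs nontrivially, so `Xᵢ` lies in the isotropy algebra of `ξ|_{kᵢ}`, which
is `z` by flatness of `kᵢ`; hence `X ∈ z`. -/

/-- The coadjoint isotropy algebra `k_ξ = {X ∈ k : ξ([X,k]) = 0}`. -/
def isotropy {L : Type*} [LieRing L] [LieAlgebra ℝ L] (ξ : L →ₗ[ℝ] ℝ) :
    Submodule ℝ L where
  carrier := {X | ∀ Y : L, ξ ⁅X, Y⁆ = 0}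
  add_mem' := by
    intro a b ha hb Y
    rw [add_lie, map_add, ha Y, hb Y, add_zero]
  zero_mem' := by
    intro Y
    rw [zero_lie, map_zero]
  smul_mem' := by
    intro c a ha Y
    rw [smul_lie, map_smul, ha Y, smul_zero]

section Isotropy

variable {L : Type*} [LieRing L] [LieAlgebra ℝ L]

lemma le_isotropy_of_forall_lie_eq_zero {z : Submodule ℝ L} (ξ : L →ₗ[ℝ] ℝ)
    (hz : ∀ X ∈ z, ∀ Y : L, ⁅X, Y⁆ = 0) : z ≤ isotropy ξ := fun X hX Y => by
  rw [hz X hX Y, map_zero]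

lemma mem_of_add_mem_isotropy {k : LieSubalgebra ℝ L} {z : Submodule ℝ L} {ξ : L →ₗ[ℝ] ℝ}
    (hflat : ∀ X ∈ k, X ∉ z → ∃ Y ∈ k, ξ ⁅X, Y⁆ ≠ 0) {X₁ X₂ : L} (hX₁ : X₁ ∈ k)
    (hX₂ : ∀ Y ∈ k, ⁅X₂, Y⁆ = 0) (hX : X₁ + X₂ ∈ isotropy ξ) : X₁ ∈ z := by
  by_contra hX₁z
  obtain ⟨Y, hY, hξY⟩ := hflat X₁ hX₁ hX₁z
  apply hξY
  simpa only [add_lie, hX₂ Y hY, add_zero] using hX Y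

end Isotropy

theorem reduced_direct_product_flat_general
    {K : Type*} [LieRing K] [LieAlgebra ℝ K]
    (z : Submodule ℝ K) (hz : ∀ X : K, X ∈ z ↔ ∀ Y : K, ⁅X, Y⁆ = 0)
    (k₁ k₂ : LieSubalgebra ℝ K)
    (hsum : k₁.toSubmodule ⊔ k₂.toSubmodule = ⊤)
    (hcomm : ∀ x ∈ k₁, ∀ y ∈ k₂, ⁅x, y⁆ = (0 : K))
    (c₁ c₂ : Submodule ℝ K)
    (hflat₁ : ∀ ξ₁ : K →ₗ[ℝ] ℝ, (∃ Z ∈ z, ξ₁ Z ≠ 0) → c₁ ≤ LinearMap.ker ξ₁ →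
      ∀ X ∈ k₁, X ∉ z → ∃ Y ∈ k₁, ξ₁ ⁅X, Y⁆ ≠ 0)
    (hflat₂ : ∀ ξ₂ : K →ₗ[ℝ] ℝ, (∃ Z ∈ z, ξ₂ Z ≠ 0) → c₂ ≤ LinearMap.ker ξ₂ →
      ∀ X ∈ k₂, X ∉ z → ∃ Y ∈ k₂, ξ₂ ⁅X, Y⁆ ≠ 0)
    (ξ : K →ₗ[ℝ] ℝ) (hξz : ∃ Z ∈ z, ξ Z ≠ 0)
    (hξ₁ : c₁ ≤ LinearMap.ker ξ) (hξ₂ : c₂ ≤ LinearMap.ker ξ) :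
    isotropy ξ = z := by
  refine le_antisymm (fun X hX => ?_)
    (le_isotropy_of_forall_lie_eq_zero ξ fun X hX => (hz X).mp hX)
  obtain ⟨X₁, hX₁, X₂, hX₂, rfl⟩ := Submodule.mem_sup.mp (hsum ▸ Submodule.mem_top (x := X))
  have h₁ : X₁ ∈ z := mem_of_add_mem_isotropy (hflat₁ ξ hξz hξ₁) hX₁
    (fun Y hY => by rw [← lie_skew, hcomm Y hY X₂ hX₂, neg_zero]) hX
  have h₂ : X₂ ∈ z := mem_of_add_mem_isotropy (hflat₂ ξ hξz hξ₂) hX₂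
    (fun Y hY => hcomm X₁ hX₁ Y hY) (add_comm X₁ X₂ ▸ hX)
  exact z.add_mem h₁ h₂

/-- A reduced direct product `k = k₁ ×̃ k₂` of nilpotent Lie algebras
with common 1-dimensional center `z` and generic flat coadjoint orbits again has
generic flat coadjoint orbits: for every `ξ ∈ k*` vanishing on the chosen
complements `c₁, c₂` but not on `z`, the isotropy algebra `k_ξ` equals `z`. -/
theorem reduced_direct_product_flat
    {K : Type*} [LieRing K] [LieAlgebra ℝ K] [Module.Finite ℝ K]
    [LieModule.IsNilpotent K K]
    (z : Submodule ℝ K) (hz : ∀ X : K, X ∈ z ↔ ∀ Y : K, ⁅X, Y⁆ = 0)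
    (hz1 : Module.finrank ℝ z = 1)
    (k₁ k₂ : LieSubalgebra ℝ K)
    (hsum : k₁.toSubmodule ⊔ k₂.toSubmodule = ⊤)
    (hint : k₁.toSubmodule ⊓ k₂.toSubmodule = z)
    (hcomm : ∀ x ∈ k₁, ∀ y ∈ k₂, ⁅x, y⁆ = (0 : K))
    (c₁ c₂ : Submodule ℝ K)
    (hc₁ : z ⊔ c₁ = k₁.toSubmodule) (hc₁' : z ⊓ c₁ = ⊥)
    (hc₂ : z ⊔ c₂ = k₂.toSubmodule) (hc₂' : z ⊓ c₂ = ⊥)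
    (hflat₁ : ∀ ξ₁ : K →ₗ[ℝ] ℝ, (∃ Z ∈ z, ξ₁ Z ≠ 0) → c₁ ≤ LinearMap.ker ξ₁ →
      ∀ X ∈ k₁, X ∉ z → ∃ Y ∈ k₁, ξ₁ ⁅X, Y⁆ ≠ 0)
    (hflat₂ : ∀ ξ₂ : K →ₗ[ℝ] ℝ, (∃ Z ∈ z, ξ₂ Z ≠ 0) → c₂ ≤ LinearMap.ker ξ₂ →
      ∀ X ∈ k₂, X ∉ z → ∃ Y ∈ k₂, ξ₂ ⁅X, Y⁆ ≠ 0)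
    (ξ : K →ₗ[ℝ] ℝ) (hξz : ∃ Z ∈ z, ξ Z ≠ 0)
    (hξ₁ : c₁ ≤ LinearMap.ker ξ) (hξ₂ : c₂ ≤ LinearMap.ker ξ) :
    isotropy ξ = z :=
  reduced_direct_product_flat_general z hz k₁ k₂ hsum hcomm c₁ c₂ hflat₁ hflat₂ ξ hξz hξ₁ hξ₂
end

section
/- Let g₀ be the 4-dimensional Lie algebra with basis X₂,X₃,X₄,X₅ and single nonzero bracket [X₅,X₄] = X₂, and let ω be the skew-symmetric bilinear form with ω(X₂,X₅) = −1, ω(X₄,X₃) = 1, and ω(Xᵢ,Xⱼ) = 0 for all other pairs with i < j. Then ω is nondegenerate and satisfies the 2-cocycle condition ω(x,[y,z]) + ω(y,[z,x]) + ω(z,[x,y]) = 0 for all x,y,z ∈ g₀. -/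
/-- The bracket of the 4-dimensional Lie algebra with basis `X₂,X₃,X₄,X₅`
(coordinates `x 0, x 1, x 2, x 3`) and single nonzero bracket `[X₅,X₄] = X₂`. -/
def brakH (x y : Fin 4 → ℝ) : Fin 4 → ℝ :=
  ![x 3 * y 2 - x 2 * y 3, 0, 0, 0]

/-- The skew-symmetric bilinear form with `ω(X₂,X₅) = −1`, `ω(X₄,X₃) = 1`, and all
other values on basis pairs zero. -/
def omH (x y : Fin 4 → ℝ) : ℝ :=
  -(x 0 * y 3) + x 3 * y 0 - x 1 * y 2 + x 2 * y 1

/-- The form `ω` is skew-symmetric, nondegenerate, and satisfies the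
2-cocycle condition `ω(x,[y,z]) + ω(y,[z,x]) + ω(z,[x,y]) = 0`. -/
theorem omH_symplectic_cocycle :
    (∀ x y : Fin 4 → ℝ, omH x y = - omH y x) ∧
    (∀ x : Fin 4 → ℝ, (∀ y : Fin 4 → ℝ, omH x y = 0) → x = 0) ∧
    (∀ x y z : Fin 4 → ℝ,
      omH x (brakH y z) + omH y (brakH z x) + omH z (brakH x y) = 0) := by
  refine ⟨fun x y => by simp [omH]; ring, fun x h => ?_, fun x y z => by
    simp [omH, brakH]; ring⟩
  funext i
  fin_cases i
  · have := h ![0,0,0,1]; simp [omH] at this; simpa using this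
  · have := h ![0,0,1,0]; simp [omH] at this; simpa using this
  · have := h ![0,1,0,0]; simp [omH] at this; simpa using this
  · have := h ![1,0,0,0]; simp [omH] at this; simpa using this
end

section
/- On L²(ℝ²) with coordinates (t₁,t₂), fix a ∈ ℝ \ {0} and b ∈ ℝ, and define the operators A₁ = ia, A₂ = i t₁, A₃ = i t₂, A₄ = a ∂/∂t₂, A₅ = (1/a)(−a² ∂/∂t₁ − i t₁ t₂), A₆ = (1/(6a²))(6a² t₁ ∂/∂t₂ + 6iab − 3ia t₂² + 2i t₁³) acting on Schwartz functions. Then these operators satisfy the commutation relations [A₆,A₅]=A₄, [A₆,A₄]=A₃, [A₆,A₃]=A₂, [A₅,A₄]=A₂, [A₅,A₂]=−A₁, [A₄,A₃]=A₁, and all other commutators [Aᵢ,Aⱼ] for i > j vanish. -/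
open Complex

/-- Partial derivative in the first variable. -/
noncomputable def pd1 (f : ℝ × ℝ → ℂ) : ℝ × ℝ → ℂ :=
  fun p => deriv (fun s => f (s, p.2)) p.1

/-- Partial derivative in the second variable. -/
noncomputable def pd2 (f : ℝ × ℝ → ℂ) : ℝ × ℝ → ℂ :=
  fun p => deriv (fun s => f (p.1, s)) p.2

/-- The six operators `A₁, …, A₆` (0-indexed) of the representation `dπ`:
`A₁ = ia`, `A₂ = it₁`, `A₃ = it₂`, `A₄ = a ∂/∂t₂`,
`A₅ = (1/a)(−a²∂/∂t₁ − it₁t₂)`,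
`A₆ = (1/(6a²))(6a²t₁∂/∂t₂ + 6iab − 3iat₂² + 2it₁³)`. -/
noncomputable def opA (a b : ℝ) : Fin 6 → (ℝ × ℝ → ℂ) → (ℝ × ℝ → ℂ) :=
  ![fun f p => I * a * f p,
    fun f p => I * p.1 * f p,
    fun f p => I * p.2 * f p,
    fun f p => a * pd2 f p,
    fun f p => (1 / (a : ℂ)) * (-(a : ℂ) ^ 2 * pd1 f p - I * p.1 * p.2 * f p),
    fun f p => (1 / (6 * (a : ℂ) ^ 2)) *
      (6 * (a : ℂ) ^ 2 * (p.1 : ℂ) * pd2 f p + 6 * I * a * b * f p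
        - 3 * I * a * (p.2 : ℂ) ^ 2 * f p + 2 * I * (p.1 : ℂ) ^ 3 * f p)]

/-- The commutator `[S, T] = S∘T − T∘S` of two operators. -/
noncomputable def opComm (S T : (ℝ × ℝ → ℂ) → (ℝ × ℝ → ℂ))
    (f : ℝ × ℝ → ℂ) : ℝ × ℝ → ℂ :=
  S (T f) - T (S f)

/-! Every `Aₖ` is a differential operator of order at most one with polynomial coefficients, so
each commutator is computed by the Leibniz rule for `∂/∂t₁` and `∂/∂t₂`: only derivatives of
the coefficients survive, together with the mixed second partials of `f` coming from `[A₆, A₅]`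
and `[A₅, A₄]`, which cancel by the symmetry of second derivatives of a `C²` function. -/

section PartialDerivatives

variable {g c : ℝ × ℝ → ℂ} {p : ℝ × ℝ}

theorem hasDerivAt_pd1 (hg : DifferentiableAt ℝ g p) :
    HasDerivAt (fun s => g (s, p.2)) (pd1 g p) p.1 :=
  (hg.comp p.1 (differentiableAt_id.prodMk (differentiableAt_const _))).hasDerivAt

theorem hasDerivAt_pd2 (hg : DifferentiableAt ℝ g p) :
    HasDerivAt (fun s => g (p.1, s)) (pd2 g p) p.2 :=
  (hg.comp p.2 ((differentiableAt_const _).prodMk differentiableAt_id)).hasDerivAt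

theorem pd1_const (z : ℂ) : pd1 (fun _ => z) p = 0 := deriv_const _ _

theorem pd2_const (z : ℂ) : pd2 (fun _ => z) p = 0 := deriv_const _ _

theorem pd1_fst : pd1 (fun q => (q.1 : ℂ)) p = 1 :=
  (hasDerivAt_id p.1).ofReal_comp.deriv.trans ofReal_one

theorem pd1_snd : pd1 (fun q => (q.2 : ℂ)) p = 0 := deriv_const p.1 (p.2 : ℂ)

theorem pd2_fst : pd2 (fun q => (q.1 : ℂ)) p = 0 := deriv_const p.2 (p.1 : ℂ)

theorem pd2_snd : pd2 (fun q => (q.2 : ℂ)) p = 1 :=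
  (hasDerivAt_id p.2).ofReal_comp.deriv.trans ofReal_one

theorem pd1_add (hc : DifferentiableAt ℝ c p) (hg : DifferentiableAt ℝ g p) :
    pd1 (fun q => c q + g q) p = pd1 c p + pd1 g p :=
  ((hasDerivAt_pd1 hc).add (hasDerivAt_pd1 hg)).deriv

theorem pd2_add (hc : DifferentiableAt ℝ c p) (hg : DifferentiableAt ℝ g p) :
    pd2 (fun q => c q + g q) p = pd2 c p + pd2 g p :=
  ((hasDerivAt_pd2 hc).add (hasDerivAt_pd2 hg)).deriv

theorem pd1_sub (hc : DifferentiableAt ℝ c p) (hg : DifferentiableAt ℝ g p) :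
    pd1 (fun q => c q - g q) p = pd1 c p - pd1 g p :=
  ((hasDerivAt_pd1 hc).sub (hasDerivAt_pd1 hg)).deriv

theorem pd2_sub (hc : DifferentiableAt ℝ c p) (hg : DifferentiableAt ℝ g p) :
    pd2 (fun q => c q - g q) p = pd2 c p - pd2 g p :=
  ((hasDerivAt_pd2 hc).sub (hasDerivAt_pd2 hg)).deriv

theorem pd1_mul (hc : DifferentiableAt ℝ c p) (hg : DifferentiableAt ℝ g p) :
    pd1 (fun q => c q * g q) p = pd1 c p * g p + c p * pd1 g p :=
  ((hasDerivAt_pd1 hc).mul (hasDerivAt_pd1 hg)).deriv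

theorem pd2_mul (hc : DifferentiableAt ℝ c p) (hg : DifferentiableAt ℝ g p) :
    pd2 (fun q => c q * g q) p = pd2 c p * g p + c p * pd2 g p :=
  ((hasDerivAt_pd2 hc).mul (hasDerivAt_pd2 hg)).deriv

theorem pd1_pow (n : ℕ) (hc : DifferentiableAt ℝ c p) :
    pd1 (fun q => c q ^ n) p = n * c p ^ (n - 1) * pd1 c p :=
  ((hasDerivAt_pd1 hc).pow n).deriv

theorem pd2_pow (n : ℕ) (hc : DifferentiableAt ℝ c p) :
    pd2 (fun q => c q ^ n) p = n * c p ^ (n - 1) * pd2 c p :=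
  ((hasDerivAt_pd2 hc).pow n).deriv

end PartialDerivatives

section Smoothness

variable {g : ℝ × ℝ → ℂ} {n : WithTop ℕ∞}

theorem pd1_eq_fderiv (hg : Differentiable ℝ g) : pd1 g = fun p => fderiv ℝ g p (1, 0) := by
  funext p
  refine (hasDerivAt_pd1 (hg p)).unique ?_
  simpa [Function.comp_def] using (hg p).hasFDerivAt.comp_hasDerivAt p.1
    ((hasDerivAt_id p.1).prodMk (hasDerivAt_const p.1 p.2))

theorem pd2_eq_fderiv (hg : Differentiable ℝ g) : pd2 g = fun p => fderiv ℝ g p (0, 1) := by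
  funext p
  refine (hasDerivAt_pd2 (hg p)).unique ?_
  simpa [Function.comp_def] using (hg p).hasFDerivAt.comp_hasDerivAt p.2
    ((hasDerivAt_const p.2 p.1).prodMk (hasDerivAt_id p.2))

theorem contDiff_pd1 (hg : ContDiff ℝ (n + 1) g) : ContDiff ℝ n (pd1 g) := by
  rw [pd1_eq_fderiv (hg.differentiable (by simp))]
  exact (hg.fderiv_right le_rfl).clm_apply contDiff_const

theorem contDiff_pd2 (hg : ContDiff ℝ (n + 1) g) : ContDiff ℝ n (pd2 g) := by
  rw [pd2_eq_fderiv (hg.differentiable (by simp))]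
  exact (hg.fderiv_right le_rfl).clm_apply contDiff_const

theorem pd2_pd1_comm (hg : ContDiff ℝ 2 g) : pd2 (pd1 g) = pd1 (pd2 g) := by
  have hd : Differentiable ℝ g := hg.differentiable (by simp)
  have hdd : Differentiable ℝ (fderiv ℝ g) :=
    (hg.fderiv_right (m := 1) le_rfl).differentiable one_ne_zero
  have hflip (v : ℝ × ℝ) (p : ℝ × ℝ) :
      fderiv ℝ (fun q => fderiv ℝ g q v) p = (fderiv ℝ (fderiv ℝ g) p).flip v := by
    simpa using fderiv_clm_apply (hdd p) (differentiableAt_const v)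
  ext p
  rw [pd2_eq_fderiv ((contDiff_pd1 (n := 1) hg).differentiable one_ne_zero),
    pd1_eq_fderiv ((contDiff_pd2 (n := 1) hg).differentiable one_ne_zero), pd1_eq_fderiv hd,
    pd2_eq_fderiv hd]
  simp only [hflip]
  exact hg.contDiffAt.isSymmSndFDerivAt (by simp) _ _

end Smoothness

theorem opComm_opA_eq_zero (a b : ℝ) {g : ℝ × ℝ → ℂ} (hg : Differentiable ℝ g) {i j : Fin 6}
    (hji : j < i) (hij : (i, j) ∉ ({(5, 4), (5, 3), (5, 2), (4, 3), (4, 1), (3, 2)} :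
      Set (Fin 6 × Fin 6))) :
    opComm (opA a b i) (opA a b j) g = 0 := by
  funext p
  fin_cases i <;> fin_cases j <;> simp at hji hij <;>
    simp (disch := fun_prop) only [opComm, opA, Fin.reduceFinMk, Matrix.cons_val, Pi.sub_apply,
      Pi.zero_apply, pd1_mul, pd2_mul, pd1_const, pd2_const, pd1_snd, pd2_fst] <;>
    ring

theorem opComm_opA_eq_opA {a : ℝ} (b : ℝ) (ha : a ≠ 0) {g : ℝ × ℝ → ℂ}
    (hg : ContDiff ℝ 2 g) :
    opComm (opA a b 5) (opA a b 4) g = opA a b 3 g ∧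
    opComm (opA a b 5) (opA a b 3) g = opA a b 2 g ∧
    opComm (opA a b 5) (opA a b 2) g = opA a b 1 g ∧
    opComm (opA a b 4) (opA a b 3) g = opA a b 1 g ∧
    opComm (opA a b 4) (opA a b 1) g = - opA a b 0 g ∧
    opComm (opA a b 3) (opA a b 2) g = opA a b 0 g := by
  have ha' : (a : ℂ) ≠ 0 := ofReal_ne_zero.mpr ha
  have hg₀ : Differentiable ℝ g := hg.differentiable (by simp)
  have hg₁ : Differentiable ℝ (pd1 g) := (contDiff_pd1 (n := 1) hg).differentiable one_ne_zero
  have hg₂ : Differentiable ℝ (pd2 g) := (contDiff_pd2 (n := 1) hg).differentiable one_ne_zero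
  refine ⟨?_, ?_, ?_, ?_, ?_, ?_⟩ <;> funext p <;>
    simp (disch := fun_prop) only [opComm, opA, Matrix.cons_val, Pi.sub_apply, Pi.neg_apply,
      pd1_add, pd1_sub, pd1_mul, pd1_pow, pd2_add, pd2_sub, pd2_mul, pd2_pow, pd1_const, pd2_const,
      pd1_fst, pd1_snd, pd2_fst, pd2_snd, pd2_pd1_comm hg] <;>
    field_simp <;>
    ring

/-- On Schwartz functions on `ℝ²`, the operators `A₁, …, A₆` satisfy
`[A₆,A₅]=A₄`, `[A₆,A₄]=A₃`, `[A₆,A₃]=A₂`, `[A₅,A₄]=A₂`, `[A₅,A₂]=−A₁`,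
`[A₄,A₃]=A₁`, and all other commutators `[Aᵢ,Aⱼ]` with `i > j` vanish; thus they
realize the 6-dimensional 4-step nilpotent Lie algebra of the paper. -/
theorem schwartz_operators_commutation (a b : ℝ) (ha : a ≠ 0)
    (f : SchwartzMap (ℝ × ℝ) ℂ) :
    opComm (opA a b 5) (opA a b 4) ⇑f = opA a b 3 ⇑f ∧
    opComm (opA a b 5) (opA a b 3) ⇑f = opA a b 2 ⇑f ∧
    opComm (opA a b 5) (opA a b 2) ⇑f = opA a b 1 ⇑f ∧
    opComm (opA a b 4) (opA a b 3) ⇑f = opA a b 1 ⇑f ∧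
    opComm (opA a b 4) (opA a b 1) ⇑f = - opA a b 0 ⇑f ∧
    opComm (opA a b 3) (opA a b 2) ⇑f = opA a b 0 ⇑f ∧
    ∀ i j : Fin 6, j < i →
      (i, j) ∉ ({(5, 4), (5, 3), (5, 2), (4, 3), (4, 1), (3, 2)} :
        Set (Fin 6 × Fin 6)) →
      opComm (opA a b i) (opA a b j) ⇑f = 0 := by
  have hf : ContDiff ℝ 2 ⇑f := f.smooth 2
  obtain ⟨h54, h53, h52, h43, h41, h32⟩ := opComm_opA_eq_opA b ha hf
  exact ⟨h54, h53, h52, h43, h41, h32,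
    fun i j hji hij => opComm_opA_eq_zero a b (hf.differentiable (by simp)) hji hij⟩
end

section
/- Let g be a nilpotent Lie algebra with Jordan-Hölder basis X₁,...,X_m (gⱼ := span{X₁,...,Xⱼ} satisfy [g,gⱼ] ⊆ g_{j−1}), ξ₀ ∈ g*, and e = {j : Xⱼ ∉ g_{j−1} + g_{ξ₀}} the set of jump indices. Setting g_e := span{Xⱼ : j ∈ e}, one has the direct sum decomposition g = g_{ξ₀} ⊕ g_e of vector spaces. -/
/-!
Take any subspace `G` and any well-ordered spanning family `X`, and let `e` be the set of indices
at which `X j ∉ span{X i : i < j} + G`.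
A nonzero vector of `G ∩ span{X j : j ∈ e}` has a leading term `a • X k` with `k ∈ e` and `a ≠ 0`,
which would put `X k` into `span{X i : i < k} + G`. Conversely, well-founded induction along the
index order puts every `X i` into `G + span{X j : j ∈ e}`.
-/

open Submodule Set

section

variable {R V ι : Type*} [DivisionRing R] [AddCommGroup V] [Module R V] [LinearOrder ι]

theorem exists_eq_smul_add_of_mem_span_image {X : ι → V} {s : Set ι} {v : V}
    (hv : v ∈ span R (X '' s)) (hv0 : v ≠ 0) :
    ∃ k ∈ s, ∃ a : R, a ≠ 0 ∧ ∃ w ∈ span R (X '' Iio k), v = a • X k + w := by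
  obtain ⟨l, hl, rfl⟩ := (Finsupp.mem_span_image_iff_linearCombination R).1 hv
  have hne : l.support.Nonempty :=
    Finsupp.support_nonempty_iff.2 fun h => hv0 (by rw [h, map_zero])
  set k := l.support.max' hne
  have hk : k ∈ l.support := l.support.max'_mem hne
  refine ⟨k, hl hk, l k, Finsupp.mem_support_iff.1 hk, Finsupp.linearCombination R X (l.erase k),
    (Finsupp.mem_span_image_iff_linearCombination R).2 ⟨_, fun i hi => ?_, rfl⟩, ?_⟩
  · rw [Finsupp.support_erase, Finset.mem_coe, Finset.mem_erase] at hi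
    exact lt_of_le_of_ne (l.support.le_max' i hi.2) hi.1
  · conv_lhs => rw [← Finsupp.single_add_erase k l]
    rw [map_add, Finsupp.linearCombination_single]

def jumpSet (G : Submodule R V) (X : ι → V) : Set ι :=
  {j | X j ∉ span R (X '' Iio j) ⊔ G}

theorem disjoint_span_image_jumpSet (G : Submodule R V) (X : ι → V) :
    Disjoint G (span R (X '' jumpSet G X)) := by
  rw [disjoint_iff_inf_le]
  rintro v ⟨hvG, hvS⟩
  by_contra hv0
  obtain ⟨k, hk, a, ha, w, hw, rfl⟩ := exists_eq_smul_add_of_mem_span_image hvS hv0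
  refine hk ?_
  have : X k = a⁻¹ • ((a • X k + w) - w) := by rw [add_sub_cancel_right, inv_smul_smul₀ ha]
  rw [this]
  exact smul_mem _ _ (sub_mem (mem_sup_right hvG) (mem_sup_left hw))

theorem span_range_le_sup_span_image_jumpSet [WellFoundedLT ι] (G : Submodule R V) (X : ι → V) :
    span R (range X) ≤ G ⊔ span R (X '' jumpSet G X) := by
  rw [span_le, range_subset_iff]
  intro i
  induction i using WellFoundedLT.induction with
  | _ i ih =>
    by_cases hi : i ∈ jumpSet G X
    · exact mem_sup_right (subset_span (mem_image_of_mem X hi))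
    · have hflag : span R (X '' Iio i) ≤ G ⊔ span R (X '' jumpSet G X) :=
        span_le.2 (image_subset_iff.2 ih)
      exact sup_le hflag le_sup_left (not_not.1 hi)

end

theorem isotropy_jump_complement_general
    {L : Type*} [LieRing L] [LieAlgebra ℝ L]
    {m : ℕ} (X : Fin m → L)
    (hspan : Submodule.span ℝ (Set.range X) = ⊤)
    (F : ℕ → Submodule ℝ L)
    (hF : ∀ j : ℕ, F j = Submodule.span ℝ (X '' {i : Fin m | (i : ℕ) < j}))
    (ξ₀ : L →ₗ[ℝ] ℝ) :
    isotropy ξ₀ ⊓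
        Submodule.span ℝ (X '' {j : Fin m | X j ∉ F (j : ℕ) ⊔ isotropy ξ₀}) = ⊥ ∧
      isotropy ξ₀ ⊔
        Submodule.span ℝ (X '' {j : Fin m | X j ∉ F (j : ℕ) ⊔ isotropy ξ₀}) = ⊤ := by
  have he : {j : Fin m | X j ∉ F (j : ℕ) ⊔ isotropy ξ₀} = jumpSet (isotropy ξ₀) X := by
    simp only [hF]
    rfl
  rw [he]
  exact ⟨(disjoint_span_image_jumpSet _ X).eq_bot,
    top_le_iff.1 (hspan ▸ span_range_le_sup_span_image_jumpSet _ X)⟩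

/-- For a nilpotent Lie algebra with Jordan–Hölder basis
`X₁, …, X_m` (here `X : Fin m → L`, 0-indexed, with flag `F j = span{X i : i < j}`
and `[g, F j] ⊆ F (j−1)`), `ξ₀ ∈ g*`, and `g_e` the span of the jump-index basis
vectors, one has the direct sum decomposition `g = g_{ξ₀} ⊕ g_e`. -/
theorem isotropy_jump_complement
    {L : Type*} [LieRing L] [LieAlgebra ℝ L] [Module.Finite ℝ L]
    [LieRing.IsNilpotent L]
    {m : ℕ} (X : Fin m → L)
    (hLI : LinearIndependent ℝ X)
    (hspan : Submodule.span ℝ (Set.range X) = ⊤)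
    (F : ℕ → Submodule ℝ L)
    (hF : ∀ j : ℕ, F j = Submodule.span ℝ (X '' {i : Fin m | (i : ℕ) < j}))
    (hideal : ∀ j : ℕ, ∀ x : L, ∀ y ∈ F (j + 1), ⁅x, y⁆ ∈ F j)
    (ξ₀ : L →ₗ[ℝ] ℝ) :
    isotropy ξ₀ ⊓
        Submodule.span ℝ (X '' {j : Fin m | X j ∉ F (j : ℕ) ⊔ isotropy ξ₀}) = ⊥ ∧
      isotropy ξ₀ ⊔
        Submodule.span ℝ (X '' {j : Fin m | X j ∉ F (j : ℕ) ⊔ isotropy ξ₀}) = ⊤ :=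
  isotropy_jump_complement_general X hspan F hF ξ₀
end
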